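/- Let P and K be finite nonempty index sets with |K| = n, let ρ ≥ 0, σ ≥ 0, let a : P → ℝ with a_p ≥ 0 for all p (deterministic channel gains), let g : P → ℝ and ψ : P × K → ℝ be given. On a probability space let (ω_p)_{p∈P} be i.i.d. with the uniform distribution on [-π, π] and let (ε_k)_{k∈K} be i.i.d. with distribution N(0, σ²), the two families being independent of each other. Then E[ ρ·((Σ_{p∈P} √(a_p)·g_p·Σ_{k∈K} cos(ψ_{p,k} + ω_p + ε_k))² + (Σ_{p∈P} √(a_p)·g_p·Σ_{k∈K} sin(ψ_{p,k} + ω_p + ε_k))²) ] = Σ_{p∈P} ρ·g_p²·( n·(1 − e^{−σ²}) + e^{−σ²}·Σ_{k∈K} Σ_{l∈K} cos(ψ_{p,k} − ψ_{p,l}) )·a_p. -/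

import Mathlib

open MeasureTheory ProbabilityTheory Real

/-- The uniform distribution on `[-π, π]`: density `1/(2π)` on the interval, zero elsewhere. -/
noncomputable def uniformNegPiPi : Measure ℝ :=
  ENNReal.ofReal (1 / (2 * Real.pi)) • (volume.restrict (Set.Icc (-Real.pi) Real.pi))

/-!
Expanding the squares, the received power is `Σᵢ Σⱼ wᵢ wⱼ cos (θᵢ - θⱼ)` over path–antenna
pairs `i = (p, k)`, with phases `θ_(p,k) = ψ_{p,k} + ω_p + ε_k`, and `E cos Z` is the real part of the characteristic function of `Z` at `1`.
For `p ≠ q` the difference contains the uniform phase `ω_p`, independent of everything else in it,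
whose characteristic function vanishes at `1`; for `p = q`, `k ≠ l` it is a constant plus
`ε_k - ε_l ~ N(0, 2σ²)`, which contributes the factor `e^{-σ²}`.
-/

lemma sq_sum_mul_cos_add_sq_sum_mul_sin {ι : Type*} (s : Finset ι) (w θ : ι → ℝ) :
    (∑ i ∈ s, w i * cos (θ i)) ^ 2 + (∑ i ∈ s, w i * sin (θ i)) ^ 2 =
      ∑ i ∈ s, ∑ j ∈ s, w i * w j * cos (θ i - θ j) := by
  simp only [sq, Finset.sum_mul_sum, ← Finset.sum_add_distrib, cos_sub]
  exact Finset.sum_congr rfl fun i _ => Finset.sum_congr rfl fun j _ => by ring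

lemma integral_sq_sum_mul_cos_add_sq_sum_mul_sin {Ω ι : Type*} [MeasurableSpace Ω] {μ : Measure Ω}
    [IsFiniteMeasure μ] (s : Finset ι) (w : ι → ℝ) {θ : ι → Ω → ℝ}
    (hθ : ∀ i, AEMeasurable (θ i) μ) :
    ∫ x, (∑ i ∈ s, w i * cos (θ i x)) ^ 2 + (∑ i ∈ s, w i * sin (θ i x)) ^ 2 ∂μ =
      ∑ i ∈ s, ∑ j ∈ s, w i * w j * ∫ x, cos (θ i x - θ j x) ∂μ := by
  have hint : ∀ i j, Integrable (fun x => w i * w j * cos (θ i x - θ j x)) μ := fun i j =>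
    (Integrable.of_bound (by fun_prop) 1 (ae_of_all _ fun x => abs_cos_le_one _)).const_mul _
  simp only [sq_sum_mul_cos_add_sq_sum_mul_sin]
  rw [integral_finsetSum _ fun i _ => integrable_finsetSum _ fun j _ => hint i j]
  refine Finset.sum_congr rfl fun i _ => ?_
  rw [integral_finsetSum _ fun j _ => hint i j]
  exact Finset.sum_congr rfl fun j _ => integral_const_mul _ _

lemma sum_sum_mul_ite_fst_eq {P K : Type*} [Fintype P] [Fintype K] [DecidableEq P]
    (w : P → ℝ) (F : P × K → P × K → ℝ) :
    ∑ i : P × K, ∑ j : P × K, w i.1 * w j.1 * (if i.1 = j.1 then F i j else 0) =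
      ∑ p, w p ^ 2 * ∑ k, ∑ l, F (p, k) (p, l) := by
  simp [Fintype.sum_prod_type, mul_ite, Finset.sum_ite_irrel, Finset.mul_sum, sq, mul_assoc]

lemma sum_sum_cos_sub_mul_ite {K : Type*} [Fintype K] [DecidableEq K] (E : ℝ) (d : K → ℝ) :
    ∑ k, ∑ l, cos (d k - d l) * (if k = l then 1 else E) =
      Fintype.card K * (1 - E) + E * ∑ k, ∑ l, cos (d k - d l) := by
  have h : ∀ k l, cos (d k - d l) * (if k = l then 1 else E) =
      E * cos (d k - d l) + if k = l then 1 - E else 0 := by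
    intro k l
    split_ifs with hkl
    · simp [hkl]
    · ring
  simp [h, Finset.sum_add_distrib, ← Finset.mul_sum, add_comm, mul_sub]

lemma ProbabilityTheory.iIndepFun.indepFun_comp_finset {Ω ι β γ : Type*} [MeasurableSpace Ω]
    {μ : Measure Ω} [MeasurableSpace β] [MeasurableSpace γ] {f : ι → Ω → β}
    (h : iIndepFun f μ) (hf : ∀ i, Measurable (f i)) {i : ι} {T : Finset ι} (hi : i ∉ T)
    {φ : (T → β) → γ} (hφ : Measurable φ) :
    IndepFun (f i) (fun x => φ (fun j => f j x)) μ := by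
  classical
  exact (h.indepFun_finset {i} T (Finset.disjoint_singleton_left.2 hi) hf).comp
    (measurable_pi_apply ⟨i, Finset.mem_singleton_self i⟩) hφ

instance : IsProbabilityMeasure uniformNegPiPi where
  measure_univ := by
    rw [uniformNegPiPi, Measure.smul_apply, Measure.restrict_apply_univ, volume_Icc,
      smul_eq_mul, ← ENNReal.ofReal_mul (by positivity)]
    have := pi_pos
    field_simp
    norm_num

lemma charFun_uniformNegPiPi_one : charFun uniformNegPiPi 1 = 0 := by
  rw [charFun_apply_real, uniformNegPiPi, integral_smul_measure, integral_Icc_eq_integral_Ioc,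
    ← intervalIntegral.integral_of_le (by linarith [pi_pos])]
  simp only [Complex.ofReal_one, one_mul, mul_comm _ Complex.I]
  rw [integral_exp_mul_complex Complex.I_ne_zero]
  simp [mul_comm Complex.I, Complex.exp_pi_mul_I, Complex.exp_neg_pi_mul_I]

section

variable {Ω : Type*} [MeasurableSpace Ω] {μ : Measure Ω}

lemma integral_cos_of_hasLaw {X : Ω → ℝ} {ν : Measure ℝ} [IsFiniteMeasure ν] (hX : HasLaw X ν μ) :
    ∫ x, cos (X x) ∂μ = (charFun ν 1).re := by
  rw [← Function.comp_def cos X, hX.integral_comp continuous_cos.aestronglyMeasurable,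
    charFun_apply_real, ← Complex.reCLM_apply, ← ContinuousLinearMap.integral_comp_comm]
  · simp [Complex.exp_ofReal_mul_I_re]
  · exact Integrable.of_bound (by fun_prop) 1 (ae_of_all _ fun x => by
      simp [Complex.norm_exp_ofReal_mul_I])

lemma integral_cos_of_hasLaw_gaussianReal {X : Ω → ℝ} {m : ℝ} {v : NNReal}
    (hX : HasLaw X (gaussianReal m v) μ) :
    ∫ x, cos (X x) ∂μ = cos m * exp (-(v / 2)) := by
  rw [integral_cos_of_hasLaw hX, charFun_gaussianReal, Complex.exp_re]
  simp [mul_comm]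

lemma integral_cos_add_of_indepFun_uniformNegPiPi [IsFiniteMeasure μ] {X Y : Ω → ℝ}
    (hX : HasLaw X uniformNegPiPi μ) (hY : AEMeasurable Y μ) (hXY : IndepFun X Y μ) :
    ∫ x, cos (X x + Y x) ∂μ = 0 := by
  rw [integral_cos_of_hasLaw (hXY.hasLaw_fun_add hX ⟨hY, rfl⟩), charFun_conv,
    charFun_uniformNegPiPi_one, zero_mul, Complex.zero_re]

lemma integral_cos_const_add_sub_of_indepFun_gaussianReal [IsFiniteMeasure μ] {X Y : Ω → ℝ}
    {v : NNReal} (hX : HasLaw X (gaussianReal 0 v) μ) (hY : HasLaw Y (gaussianReal 0 v) μ)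
    (hXY : IndepFun X Y μ) (c : ℝ) :
    ∫ x, cos (c + (X x - Y x)) ∂μ = cos c * exp (-v) := by
  have hZ : HasLaw (fun x => c + (X x - Y x)) (gaussianReal c (v + v)) μ := by
    have hsub := (hXY.comp measurable_id measurable_neg).hasLaw_add hX (gaussianReal_neg hY)
    rw [gaussianReal_conv_gaussianReal] at hsub
    simpa [sub_eq_add_neg] using gaussianReal_const_add hsub c
  rw [integral_cos_of_hasLaw_gaussianReal hZ, NNReal.coe_add, add_self_div_two]

end

lemma integral_cos_phase_sub {Ω P K : Type*} [MeasurableSpace Ω] {μ : Measure Ω}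
    [IsProbabilityMeasure μ] [DecidableEq P] [DecidableEq K] {ω : P → Ω → ℝ} {ε : K → Ω → ℝ}
    {v : NNReal}
    (hωm : ∀ p, Measurable (ω p)) (hεm : ∀ k, Measurable (ε k))
    (hindep : iIndepFun (Sum.elim ω ε) μ) (hωdist : ∀ p, μ.map (ω p) = uniformNegPiPi)
    (hεdist : ∀ k, μ.map (ε k) = gaussianReal 0 v) (ψ : P × K → ℝ) (i j : P × K) :
    ∫ x, cos (ψ i + ω i.1 x + ε i.2 x - (ψ j + ω j.1 x + ε j.2 x)) ∂μ =
      if i.1 = j.1 then cos (ψ i - ψ j) * (if i.2 = j.2 then 1 else exp (-v)) else 0 := by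
  obtain ⟨p, k⟩ := i
  obtain ⟨q, l⟩ := j
  have hmeas : ∀ i, Measurable (Sum.elim ω ε i) := Sum.rec hωm hεm
  by_cases hpq : p = q
  · subst hpq
    by_cases hkl : k = l
    · simp [hkl]
    · have hε : ∀ k, HasLaw (ε k) (gaussianReal 0 v) μ :=
        fun k => ⟨(hεm k).aemeasurable, hεdist k⟩
      simp only [hkl, if_true, if_false]
      simp_rw [show ∀ x, ψ (p, k) + ω p x + ε k x - (ψ (p, l) + ω p x + ε l x) =
        ψ (p, k) - ψ (p, l) + (ε k x - ε l x) from fun x => by ring]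
      exact integral_cos_const_add_sub_of_indepFun_gaussianReal (hε k) (hε l)
        (hindep.indepFun (i := .inr k) (j := .inr l) (by simpa using hkl)) _
  · rw [if_neg hpq]
    let T : Finset (P ⊕ K) := {.inl q, .inr k, .inr l}
    have hW : IndepFun (ω p) (fun x => ψ (p, k) - ψ (q, l) + ε k x - ω q x - ε l x) μ :=
      hindep.indepFun_comp_finset hmeas (i := .inl p) (T := T) (by simp [T, hpq])
        (φ := fun y => ψ (p, k) - ψ (q, l) + y ⟨.inr k, by simp [T]⟩ - y ⟨.inl q, by simp [T]⟩
          - y ⟨.inr l, by simp [T]⟩) (by fun_prop)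
    simp_rw [show ∀ x, ψ (p, k) + ω p x + ε k x - (ψ (q, l) + ω q x + ε l x) =
      ω p x + (ψ (p, k) - ψ (q, l) + ε k x - ω q x - ε l x) from fun x => by ring]
    exact integral_cos_add_of_indepFun_uniformNegPiPi ⟨(hωm p).aemeasurable, hωdist p⟩
      (by fun_prop) hW

theorem expected_rsrp_fixed_gains_general {Ωs : Type*} [MeasurableSpace Ωs]
    (μ : Measure Ωs) [IsProbabilityMeasure μ]
    {P K : Type*} [Fintype P] [Fintype K]
    (ρ σ : ℝ)
    (a : P → ℝ) (ha : ∀ p, 0 ≤ a p) (g : P → ℝ) (ψ : P × K → ℝ)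
    (ω : P → Ωs → ℝ) (ε : K → Ωs → ℝ)
    (hωm : ∀ p, Measurable (ω p)) (hεm : ∀ k, Measurable (ε k))
    (hindep : iIndepFun (Sum.elim ω ε) μ)
    (hωdist : ∀ p, μ.map (ω p) = uniformNegPiPi)
    (hεdist : ∀ k, μ.map (ε k) = gaussianReal 0 (σ ^ 2).toNNReal) :
    ∫ x, ρ *
        ((∑ p, Real.sqrt (a p) * g p * ∑ k, Real.cos (ψ (p, k) + ω p x + ε k x)) ^ 2 +
          (∑ p, Real.sqrt (a p) * g p * ∑ k, Real.sin (ψ (p, k) + ω p x + ε k x)) ^ 2) ∂μ =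
      ∑ p, ρ * g p ^ 2 *
          ((Fintype.card K : ℝ) * (1 - Real.exp (-σ ^ 2)) +
            Real.exp (-σ ^ 2) * ∑ k, ∑ l, Real.cos (ψ (p, k) - ψ (p, l))) * a p := by
  classical
  set w : P → ℝ := fun p => sqrt (a p) * g p
  have hcorr := integral_cos_phase_sub hωm hεm hindep hωdist hεdist ψ
  rw [Real.coe_toNNReal _ (sq_nonneg σ)] at hcorr
  calc _ = ρ * ∫ x, (∑ i : P × K, w i.1 * cos (ψ i + ω i.1 x + ε i.2 x)) ^ 2 +
        (∑ i : P × K, w i.1 * sin (ψ i + ω i.1 x + ε i.2 x)) ^ 2 ∂μ := by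
        simp only [w, Fintype.sum_prod_type, Finset.mul_sum, integral_const_mul]
    _ = ρ * ∑ p, w p ^ 2 * ∑ k, ∑ l,
          cos (ψ (p, k) - ψ (p, l)) * (if k = l then 1 else exp (-σ ^ 2)) := by
        rw [integral_sq_sum_mul_cos_add_sq_sum_mul_sin _ _ fun i => by fun_prop]
        simp only [hcorr]
        exact congrArg (ρ * ·) (sum_sum_mul_ite_fst_eq w _)
    _ = _ := by
        simp only [sum_sum_cos_sub_mul_ite, Finset.mul_sum, w, mul_pow, sq_sqrt (ha _)]
        exact Finset.sum_congr rfl fun p _ => by ring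

/-- conditional, fixed-gain form of Theorem 1: with deterministic nonnegative
channel gains `a_p`, i.i.d. per-path phases `ω_p` uniform on `[-π, π]`, i.i.d. per-antenna
Gaussian phase errors `ε_k ~ N(0, σ²)`, the two families independent of each other (encoded
as mutual independence of the combined family over `P ⊕ K`),
`E[ρ ((Σ_p √a_p g_p Σ_k cos(ψ_{p,k} + ω_p + ε_k))² + (Σ_p √a_p g_p Σ_k sin(ψ_{p,k} + ω_p + ε_k))²)]
  = Σ_p ρ g_p² (n (1 − e^{−σ²}) + e^{−σ²} Σ_k Σ_l cos(ψ_{p,k} − ψ_{p,l})) a_p`,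
where `n = |K|`. -/
theorem expected_rsrp_fixed_gains {Ωs : Type*} [MeasurableSpace Ωs]
    (μ : Measure Ωs) [IsProbabilityMeasure μ]
    {P K : Type*} [Fintype P] [Nonempty P] [Fintype K] [Nonempty K]
    (ρ σ : ℝ) (hρ : 0 ≤ ρ) (hσ : 0 ≤ σ)
    (a : P → ℝ) (ha : ∀ p, 0 ≤ a p) (g : P → ℝ) (ψ : P × K → ℝ)
    (ω : P → Ωs → ℝ) (ε : K → Ωs → ℝ)
    (hωm : ∀ p, Measurable (ω p)) (hεm : ∀ k, Measurable (ε k))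
    (hindep : iIndepFun (Sum.elim ω ε) μ)
    (hωdist : ∀ p, μ.map (ω p) = uniformNegPiPi)
    (hεdist : ∀ k, μ.map (ε k) = gaussianReal 0 (σ ^ 2).toNNReal) :
    ∫ x, ρ *
        ((∑ p, Real.sqrt (a p) * g p * ∑ k, Real.cos (ψ (p, k) + ω p x + ε k x)) ^ 2 +
          (∑ p, Real.sqrt (a p) * g p * ∑ k, Real.sin (ψ (p, k) + ω p x + ε k x)) ^ 2) ∂μ =
      ∑ p, ρ * g p ^ 2 *
          ((Fintype.card K : ℝ) * (1 - Real.exp (-σ ^ 2)) +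
            Real.exp (-σ ^ 2) * ∑ k, ∑ l, Real.cos (ψ (p, k) - ψ (p, l))) * a p :=
  expected_rsrp_fixed_gains_general μ ρ σ a ha g ψ ω ε hωm hεm hindep hωdist hεdist
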